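/- arXiv:2605.00329 — 2 statements merged into one kernel-verified Lean document; each statement's English description precedes it below -/
import Mathlib

section
/- For any finite collection of points x_1,...,x_n in ℝ^d and real coefficients r_1,...,r_n with ∑ r_j = 0, the quadratic form ∑_{j,k} r_j r_k ‖x_j - x_k‖ is nonpositive. -/
/-!
Write `‖x - y‖` as an average of one-dimensional distances: if `v` is a standard Gaussian vector,
then `⟪a, v⟫` is centred Gaussian with standard deviation `‖a‖`, so
`𝔼 |⟪x - y, v⟫| = c ‖x - y‖`, where `c = 𝔼 |Z| > 0` for a standard normal `Z`. This reduces the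
claim to the kernel `|s - t|` on `ℝ`, which in turn is the Lebesgue integral over `u` of
`(𝟙[u ≤ s] - 𝟙[u ≤ t])²`. For any `f`, the kernel `(f x - f y)²` is negative definite because
`∑ⱼ ∑ₖ rⱼ rₖ (f xⱼ - f xₖ)² = -2 (∑ⱼ rⱼ f xⱼ)²` when `∑ⱼ rⱼ = 0`, and negative definiteness
is preserved by integrals of kernels and by nonnegative multiples.
-/

open MeasureTheory ProbabilityTheory Set
open scoped RealInnerProductSpace

/-- Negative definite in the sense of Berg–Christensen–Ressel, elsewhere called conditionally
negative definite. -/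
def IsNegativeDefiniteKernel {α : Type*} (K : α → α → ℝ) : Prop :=
  ∀ (n : ℕ) (x : Fin n → α) (r : Fin n → ℝ), ∑ j, r j = 0 →
    ∑ j, ∑ k, r j * r k * K (x j) (x k) ≤ 0

namespace IsNegativeDefiniteKernel

variable {α β : Type*} {K : α → α → ℝ}

theorem comp (hK : IsNegativeDefiniteKernel K) (f : β → α) :
    IsNegativeDefiniteKernel fun x y => K (f x) (f y) :=
  fun n x r hr => hK n (f ∘ x) r hr

theorem const_mul (hK : IsNegativeDefiniteKernel K) {c : ℝ} (hc : 0 ≤ c) :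
    IsNegativeDefiniteKernel fun x y => c * K x y := by
  intro n x r hr
  calc ∑ j, ∑ k, r j * r k * (c * K (x j) (x k))
      = c * ∑ j, ∑ k, r j * r k * K (x j) (x k) := by
        simp only [Finset.mul_sum]; congr! 2; ring
    _ ≤ 0 := mul_nonpos_of_nonneg_of_nonpos hc (hK n x r hr)

theorem integral [MeasurableSpace β] {μ : Measure β} {K : β → α → α → ℝ}
    (hK : ∀ u, IsNegativeDefiniteKernel (K u)) (hint : ∀ x y, Integrable (fun u => K u x y) μ) :
    IsNegativeDefiniteKernel fun x y => ∫ u, K u x y ∂μ := by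
  intro n x r hr
  have hint' : ∀ j k, Integrable (fun u => r j * r k * K u (x j) (x k)) μ :=
    fun j k => (hint _ _).const_mul _
  calc ∑ j, ∑ k, r j * r k * ∫ u, K u (x j) (x k) ∂μ
      = ∫ u, ∑ j, ∑ k, r j * r k * K u (x j) (x k) ∂μ := by
        rw [integral_finsetSum _ fun j _ => integrable_finsetSum _ fun k _ => hint' j k]
        simp only [integral_finsetSum _ fun k _ => hint' _ k, integral_const_mul]
    _ ≤ 0 := integral_nonpos fun u => hK u n x r hr

end IsNegativeDefiniteKernel

theorem isNegativeDefiniteKernel_sq_sub {α : Type*} (f : α → ℝ) :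
    IsNegativeDefiniteKernel fun x y => (f x - f y) ^ 2 := by
  intro n x r hr
  have hexpand : ∑ j, ∑ k, r j * r k * (f (x j) - f (x k)) ^ 2
      = (∑ j, r j * f (x j) ^ 2) * ∑ k, r k + (∑ j, r j) * ∑ k, r k * f (x k) ^ 2
        - 2 * ((∑ j, r j * f (x j)) * ∑ k, r k * f (x k)) := by
    rw [Finset.sum_mul_sum, Finset.sum_mul_sum, Finset.sum_mul_sum]
    simp only [Finset.mul_sum, ← Finset.sum_add_distrib, ← Finset.sum_sub_distrib]
    congr! 2; ring
  rw [hexpand, hr, ← sq]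
  nlinarith [sq_nonneg (∑ j, r j * f (x j))]

theorem sq_indicator_Iic_sub_indicator_Iic (s t u : ℝ) :
    ((Iic s).indicator 1 u - (Iic t).indicator 1 u) ^ 2 = (uIoc s t).indicator (1 : ℝ → ℝ) u := by
  by_cases hs : u ≤ s <;> by_cases ht : u ≤ t <;> simp [indicator, hs, ht, mem_uIoc]

theorem isNegativeDefiniteKernel_abs_sub : IsNegativeDefiniteKernel fun s t : ℝ => |s - t| := by
  have hrepr : ∀ s t : ℝ, |s - t| = ∫ u, ((Iic s).indicator 1 u - (Iic t).indicator 1 u) ^ 2 := by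
    intro s t
    simp only [sq_indicator_Iic_sub_indicator_Iic, integral_indicator_one measurableSet_uIoc,
      measureReal_def, Real.volume_uIoc, abs_sub_comm t s, ENNReal.toReal_ofReal (abs_nonneg _)]
  simp only [hrepr]
  refine IsNegativeDefiniteKernel.integral (fun u => isNegativeDefiniteKernel_sq_sub _) ?_
  intro s t
  simp only [sq_indicator_Iic_sub_indicator_Iic]
  exact (integrable_indicator_iff measurableSet_uIoc).2
    (integrableOn_const (by simp [Real.volume_uIoc]))

theorem integral_abs_gaussianReal_pos : 0 < ∫ t, |t| ∂gaussianReal 0 1 := by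
  rw [integral_pos_iff_support_of_nonneg (fun t => abs_nonneg t) IsGaussian.integrable_id.abs]
  have hsupp : Function.support (fun t : ℝ => |t|) = {0}ᶜ := by ext; simp
  have := nullSingletonClass_gaussianReal (μ := 0) one_ne_zero
  rw [hsupp, prob_compl_eq_one_sub (measurableSet_singleton 0), measure_singleton]
  simp

section FiniteDimensional

variable {E : Type*} [NormedAddCommGroup E] [InnerProductSpace ℝ E] [FiniteDimensional ℝ E]

theorem integral_abs_inner_stdGaussian [MeasurableSpace E] [BorelSpace E] (a : E) :
    ∫ v, |⟪a, v⟫| ∂stdGaussian E = ‖a‖ * ∫ t, |t| ∂gaussianReal 0 1 := by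
  have hmap : (stdGaussian E).map (innerSL ℝ a) = (gaussianReal 0 1).map (‖a‖ * ·) := by
    rw [IsGaussian.map_eq_gaussianReal, integral_strongDual_stdGaussian, variance_dual_stdGaussian,
      gaussianReal_map_const_mul, innerSL_apply_norm]
    congr 1
    · simp
    · ext; simp
  calc ∫ v, |⟪a, v⟫| ∂stdGaussian E
      = ∫ t, |t| ∂(stdGaussian E).map (innerSL ℝ a) :=
        (integral_map (by fun_prop) (by fun_prop)).symm
    _ = ∫ t, |‖a‖ * t| ∂gaussianReal 0 1 := by
        rw [hmap, integral_map (by fun_prop) (by fun_prop)]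
    _ = ‖a‖ * ∫ t, |t| ∂gaussianReal 0 1 := by
        simp only [abs_mul, abs_norm, integral_const_mul]

theorem isNegativeDefiniteKernel_norm_sub_of_finiteDimensional :
    IsNegativeDefiniteKernel fun x y : E => ‖x - y‖ := by
  borelize E
  have hc := integral_abs_gaussianReal_pos
  have hrepr : ∀ x y : E, ‖x - y‖ =
      (∫ t, |t| ∂gaussianReal 0 1)⁻¹ * ∫ v, |⟪x, v⟫ - ⟪y, v⟫| ∂stdGaussian E := by
    intro x y
    simp only [← inner_sub_left]
    rw [integral_abs_inner_stdGaussian, mul_comm, mul_inv_cancel_right₀ hc.ne']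
  simp only [hrepr]
  refine IsNegativeDefiniteKernel.const_mul ?_ (inv_nonneg.2 hc.le)
  refine IsNegativeDefiniteKernel.integral
    (fun v => isNegativeDefiniteKernel_abs_sub.comp fun x => ⟪x, v⟫) fun x y => ?_
  simpa only [← inner_sub_left, innerSL_apply_apply] using
    (IsGaussian.integrable_dual _ (innerSL ℝ (x - y))).abs

end FiniteDimensional

theorem isNegativeDefiniteKernel_norm_sub {E : Type*} [NormedAddCommGroup E]
    [InnerProductSpace ℝ E] : IsNegativeDefiniteKernel fun x y : E => ‖x - y‖ := by
  intro n x r hr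
  let F := Submodule.span ℝ (range x)
  have : FiniteDimensional ℝ F := FiniteDimensional.span_of_finite ℝ (finite_range x)
  exact isNegativeDefiniteKernel_norm_sub_of_finiteDimensional (E := F) n
    (fun j => ⟨x j, Submodule.subset_span (mem_range_self j)⟩) r hr

/-- The Euclidean distance kernel is negative definite: for points `x 1, ..., x n` in `ℝ^d`
and real coefficients `r 1, ..., r n` summing to zero, `∑_{j,k} r j * r k * ‖x j - x k‖ ≤ 0`. -/
theorem euclidean_distance_kernel_negative_definite
    (d n : ℕ) (x : Fin n → EuclideanSpace ℝ (Fin d)) (r : Fin n → ℝ)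
    (hr : ∑ j, r j = 0) :
    ∑ j, ∑ k, r j * r k * ‖x j - x k‖ ≤ 0 :=
  isNegativeDefiniteKernel_norm_sub n x r hr
end

section
/- Let X, X' be i.i.d. with law P and Y, Y' be i.i.d. with law Q on ℝ^d, all integrable (finite E‖X‖ and E‖Y‖) and with (X, X', Y, Y') mutually independent. Then the energy distance E(P,Q) = 2E‖X - Y‖ - E‖X - X'‖ - E‖Y - Y'‖ is nonnegative. -/
/-!
Up to a positive factor, `‖x - y‖` is an average of cut semimetrics `|1_H x - 1_H y|` over
the half-spaces `H = {x | ⟪w, x⟫ < t}`: `|a - b|` is the length of the interval between `a`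
and `b`, and averaging `|⟪w, z⟫|` over `w` in the unit ball gives `c ‖z‖` with `c > 0` by
rotation invariance. For a single cut semimetric, with `p = P H` and `q = Q H`, the energy
inequality reads `2p(1-p) + 2q(1-q) ≤ 2(p(1-q) + q(1-p))`, i.e. `0 ≤ 2(p - q)²`, and Tonelli
carries it through the average. Everything is done with lower Lebesgue integrals, so
integrability only enters when passing back to the real-valued `energyDist`.
-/

open MeasureTheory

/-- The energy distance `E(P,Q) = 2E‖X-Y‖ - E‖X-X'‖ - E‖Y-Y'‖` of two probability measures
on `ℝ^d`, where the expectations over independent samples are written as iterated integrals. -/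
noncomputable def energyDist {d : ℕ} (P Q : Measure (EuclideanSpace ℝ (Fin d))) : ℝ :=
  2 * ∫ x, ∫ y, ‖x - y‖ ∂Q ∂P
    - ∫ x, ∫ x', ‖x - x'‖ ∂P ∂P
    - ∫ y, ∫ y', ‖y - y'‖ ∂Q ∂Q

open Set
open scoped ENNReal RealInnerProductSpace

noncomputable def cutSemimetric {α : Type*} (s : Set α) (x y : α) : ℝ≥0∞ :=
  s.indicator 1 x * sᶜ.indicator 1 y + sᶜ.indicator 1 x * s.indicator 1 y

/-- The inequality `0 ≤ 2 E k(X,Y) - E k(X,X') - E k(Y,Y')`, with the negative terms moved to the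
left so that it makes sense in `ℝ≥0∞`. -/
def EnergyIneq {α : Type*} [MeasurableSpace α] (k : α → α → ℝ≥0∞) (P Q : Measure α) : Prop :=
  ∫⁻ x, ∫⁻ x', k x x' ∂P ∂P + ∫⁻ y, ∫⁻ y', k y y' ∂Q ∂Q ≤ 2 * ∫⁻ x, ∫⁻ y, k x y ∂Q ∂P

-- `0 ≤ (a - b)²` in disguise.
theorem ENNReal.mul_one_sub_add_mul_one_sub_le {a b : ℝ≥0∞} (ha : a ≤ 1) (hb : b ≤ 1) :
    a * (1 - a) + b * (1 - b) ≤ a * (1 - b) + b * (1 - a) := by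
  wlog hab : a ≤ b generalizing a b
  · have := this hb ha (le_of_not_ge hab)
    rwa [add_comm, add_comm (b * (1 - a))] at this
  have hsplit : 1 - b + (b - a) = 1 - a := tsub_add_tsub_cancel hb hab
  calc a * (1 - a) + b * (1 - b) = a * (1 - b) + a * (b - a) + b * (1 - b) := by
        rw [← hsplit, mul_add]
    _ ≤ a * (1 - b) + b * (b - a) + b * (1 - b) := by gcongr
    _ = a * (1 - b) + b * (1 - a) := by rw [← hsplit, mul_add]; ring

theorem cutSemimetric_Iio_eq_indicator_uIoc (a b t : ℝ) :
    cutSemimetric (Iio t) a b = (uIoc a b).indicator 1 t := by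
  classical
  simp only [cutSemimetric, indicator_apply, mem_Iio, mem_compl_iff, mem_uIoc, Pi.one_apply]
  split_ifs <;> grind

theorem lintegral_cutSemimetric_Iio (a b : ℝ) :
    ∫⁻ t, cutSemimetric (Iio t) a b = ENNReal.ofReal |a - b| := by
  simp_rw [cutSemimetric_Iio_eq_indicator_uIoc]
  rw [lintegral_indicator_one measurableSet_uIoc, Real.volume_uIoc, abs_sub_comm]

section MeasurableSpace

variable {α : Type*} [MeasurableSpace α]

theorem lintegral_lintegral_cutSemimetric {s : Set α} (hs : MeasurableSet s) (μ ν : Measure α) :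
    ∫⁻ x, ∫⁻ y, cutSemimetric s x y ∂ν ∂μ = μ s * ν sᶜ + μ sᶜ * ν s := by
  have h₁ : Measurable (s.indicator (1 : α → ℝ≥0∞)) := measurable_one.indicator hs
  have h₂ : Measurable (sᶜ.indicator (1 : α → ℝ≥0∞)) := measurable_one.indicator hs.compl
  simp_rw [cutSemimetric, lintegral_add_left (h₂.const_mul _), lintegral_const_mul _ h₁,
    lintegral_const_mul _ h₂, lintegral_add_left (h₁.mul_const _), lintegral_mul_const _ h₁,
    lintegral_mul_const _ h₂, lintegral_indicator_one hs, lintegral_indicator_one hs.compl]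

theorem energyIneq_cutSemimetric {s : Set α} (hs : MeasurableSet s) (P Q : Measure α)
    [IsProbabilityMeasure P] [IsProbabilityMeasure Q] : EnergyIneq (cutSemimetric s) P Q := by
  rw [EnergyIneq, lintegral_lintegral_cutSemimetric hs, lintegral_lintegral_cutSemimetric hs,
    lintegral_lintegral_cutSemimetric hs, prob_compl_eq_one_sub hs, prob_compl_eq_one_sub hs]
  calc P s * (1 - P s) + (1 - P s) * P s + (Q s * (1 - Q s) + (1 - Q s) * Q s)
      = 2 * (P s * (1 - P s) + Q s * (1 - Q s)) := by ring
    _ ≤ 2 * (P s * (1 - Q s) + Q s * (1 - P s)) :=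
      mul_le_mul_right (ENNReal.mul_one_sub_add_mul_one_sub_le prob_le_one prob_le_one) 2
    _ = 2 * (P s * (1 - Q s) + (1 - P s) * Q s) := by ring

theorem measurable_cutSemimetric_section {ι : Type*} [MeasurableSpace ι] {S : Set (ι × α)}
    (hS : MeasurableSet S) :
    Measurable fun p : ι × α × α => cutSemimetric {x | (p.1, x) ∈ S} p.2.1 p.2.2 := by
  have h₁ : Measurable fun p : ι × α × α => (p.1, p.2.1) := by fun_prop
  have h₂ : Measurable fun p : ι × α × α => (p.1, p.2.2) := by fun_prop
  have hS₁ := measurable_one.indicator (f := (1 : ι × α → ℝ≥0∞)) hS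
  have hS₂ := measurable_one.indicator (f := (1 : ι × α → ℝ≥0∞)) hS.compl
  exact ((hS₁.comp h₁).mul (hS₂.comp h₂)).add ((hS₂.comp h₁).mul (hS₁.comp h₂))

section Mixture

variable {ι : Type*} [MeasurableSpace ι] {ν : Measure ι} [SFinite ν] {k : ι → α → α → ℝ≥0∞}

theorem Measurable.lintegral_lintegral
    (hk : Measurable fun p : ι × α × α => k p.1 p.2.1 p.2.2) (μ₁ μ₂ : Measure α) [SFinite μ₁]
    [SFinite μ₂] : Measurable fun i => ∫⁻ x, ∫⁻ y, k i x y ∂μ₂ ∂μ₁ :=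
  (hk.comp (f := fun q : (ι × α) × α => (q.1.1, q.1.2, q.2)) (by fun_prop)).lintegral_prod_right'
    |>.lintegral_prod_right'

theorem lintegral_lintegral_lintegral_comm
    (hk : Measurable fun p : ι × α × α => k p.1 p.2.1 p.2.2) (μ₁ μ₂ : Measure α) [SFinite μ₁]
    [SFinite μ₂] :
    ∫⁻ x, ∫⁻ y, ∫⁻ i, k i x y ∂ν ∂μ₂ ∂μ₁ = ∫⁻ i, ∫⁻ x, ∫⁻ y, k i x y ∂μ₂ ∂μ₁ ∂ν := by
  have hinner (x : α) : ∫⁻ y, ∫⁻ i, k i x y ∂ν ∂μ₂ = ∫⁻ i, ∫⁻ y, k i x y ∂μ₂ ∂ν :=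
    lintegral_lintegral_swap
      (hk.comp (f := fun q : α × ι => (q.2, x, q.1)) (by fun_prop)).aemeasurable
  simp_rw [hinner]
  exact lintegral_lintegral_swap
    (hk.comp (f := fun q : (α × ι) × α => (q.1.2, q.1.1, q.2))
      (by fun_prop)).lintegral_prod_right'.aemeasurable

theorem EnergyIneq.lintegral (hk : Measurable fun p : ι × α × α => k p.1 p.2.1 p.2.2)
    {P Q : Measure α} [SFinite P] [SFinite Q] (h : ∀ i, EnergyIneq (k i) P Q) :
    EnergyIneq (fun x y => ∫⁻ i, k i x y ∂ν) P Q := by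
  rw [EnergyIneq, lintegral_lintegral_lintegral_comm hk, lintegral_lintegral_lintegral_comm hk,
    lintegral_lintegral_lintegral_comm hk,
    ← lintegral_add_left (hk.lintegral_lintegral P P),
    ← lintegral_const_mul 2 (hk.lintegral_lintegral P Q)]
  exact lintegral_mono h

end Mixture

theorem EnergyIneq.of_const_mul {k : α → α → ℝ≥0∞} {P Q : Measure α} {c : ℝ≥0∞} (h0 : c ≠ 0)
    (htop : c ≠ ∞) (h : EnergyIneq (fun x y => c * k x y) P Q) : EnergyIneq k P Q := by
  simp_rw [EnergyIneq, lintegral_const_mul' _ _ htop, ← mul_add, mul_left_comm _ c] at h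
  exact (ENNReal.mul_le_mul_iff_right h0 htop).mp h

theorem energyIneq_ofReal_abs_sub {f : α → ℝ} (hf : Measurable f) (P Q : Measure α)
    [IsProbabilityMeasure P] [IsProbabilityMeasure Q] :
    EnergyIneq (fun x y => ENNReal.ofReal |f x - f y|) P Q := by
  have hcut : (fun x y => ENNReal.ofReal |f x - f y|) =
      fun x y => ∫⁻ t, cutSemimetric {x | f x < t} x y := by
    funext x y
    exact (lintegral_cutSemimetric_Iio (f x) (f y)).symm
  rw [hcut]
  exact EnergyIneq.lintegral (measurable_cutSemimetric_section (S := {p : ℝ × α | f p.2 < p.1})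
    (measurableSet_lt (hf.comp measurable_snd) measurable_fst))
    fun t => energyIneq_cutSemimetric (hf measurableSet_Iio) P Q

end MeasurableSpace

section InnerProductSpace

variable {E : Type*} [NormedAddCommGroup E] [InnerProductSpace ℝ E] [MeasurableSpace E]
  [BorelSpace E]

theorem lintegral_ofReal_abs_inner_eq_mul_norm {μ : Measure E}
    (hμ : ∀ e : E ≃ₗᵢ[ℝ] E, μ.map e = μ) {u : E} (hu : ‖u‖ = 1) (z : E) :
    ∫⁻ w, ENNReal.ofReal |⟪w, z⟫| ∂μ =
      (∫⁻ w, ENNReal.ofReal |⟪w, u⟫| ∂μ) * ENNReal.ofReal ‖z‖ := by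
  rcases eq_or_ne z 0 with rfl | hz
  · simp
  set v := ‖z‖⁻¹ • z
  have hv : ‖v‖ = 1 := norm_smul_inv_norm hz
  have hrot : ∫⁻ w, ENNReal.ofReal |⟪w, v⟫| ∂μ = ∫⁻ w, ENNReal.ofReal |⟪w, u⟫| ∂μ := by
    set e := (ℝ ∙ (v - u))ᗮ.reflection
    have he : e v = u := Submodule.reflection_sub (hv.trans hu.symm)
    calc ∫⁻ w, ENNReal.ofReal |⟪w, v⟫| ∂μ = ∫⁻ w, ENNReal.ofReal |⟪e w, u⟫| ∂μ := by
          simp_rw [← he, e.inner_map_map]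
      _ = ∫⁻ w, ENNReal.ofReal |⟪w, u⟫| ∂(μ.map e) :=
          (lintegral_map (f := fun w => ENNReal.ofReal |⟪w, u⟫|) (by fun_prop)
            e.continuous.measurable).symm
      _ = ∫⁻ w, ENNReal.ofReal |⟪w, u⟫| ∂μ := by rw [hμ]
  calc ∫⁻ w, ENNReal.ofReal |⟪w, z⟫| ∂μ
      = ∫⁻ w, ENNReal.ofReal ‖z‖ * ENNReal.ofReal |⟪w, v⟫| ∂μ := by
        refine lintegral_congr fun w => ?_
        rw [← ENNReal.ofReal_mul (norm_nonneg z), ← abs_norm, ← abs_mul, ← real_inner_smul_right,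
          smul_inv_smul₀ (norm_ne_zero_iff.mpr hz)]
    _ = ENNReal.ofReal ‖z‖ * ∫⁻ w, ENNReal.ofReal |⟪w, v⟫| ∂μ :=
        lintegral_const_mul' _ _ ENNReal.ofReal_ne_top
    _ = (∫⁻ w, ENNReal.ofReal |⟪w, u⟫| ∂μ) * ENNReal.ofReal ‖z‖ := by rw [hrot, mul_comm]

variable [FiniteDimensional ℝ E]

theorem map_volume_restrict_unitBall (e : E ≃ₗᵢ[ℝ] E) :
    (volume.restrict (Metric.ball (0 : E) 1)).map e = volume.restrict (Metric.ball 0 1) := by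
  have h := e.measurePreserving.restrict_preimage (s := Metric.ball (0 : E) 1) measurableSet_ball
  rw [e.preimage_ball, map_zero] at h
  exact h.map_eq

theorem lintegral_unitBall_ofReal_abs_inner_ne_top (u : E) (hu : ‖u‖ = 1) :
    ∫⁻ w in Metric.ball 0 1, ENNReal.ofReal |⟪w, u⟫| ≠ ∞ := by
  refine ne_top_of_le_ne_top (measure_ball_lt_top (μ := volume) (x := (0 : E)) (r := 1)).ne ?_
  rw [← setLIntegral_one]
  refine setLIntegral_mono measurable_const fun w hw => ENNReal.ofReal_le_one.mpr ?_
  calc |⟪w, u⟫| ≤ ‖w‖ * ‖u‖ := abs_real_inner_le_norm w u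
    _ ≤ 1 := by rw [hu, mul_one]; exact (mem_ball_zero_iff.mp hw).le

theorem lintegral_unitBall_ofReal_abs_inner_ne_zero (u : E) (hu : ‖u‖ = 1) :
    ∫⁻ w in Metric.ball 0 1, ENNReal.ofReal |⟪w, u⟫| ≠ 0 := by
  have hf : Measurable fun w : E => ENNReal.ofReal |⟪w, u⟫| := by fun_prop
  have hc : Continuous fun w : E => |⟪w, u⟫| := by fun_prop
  rw [← pos_iff_ne_zero, lintegral_pos_iff_support hf,
    Measure.restrict_apply (measurableSet_support hf)]
  refine (IsOpen.measure_pos volume ?_ ⟨(1 / 2 : ℝ) • u, ?_, ?_⟩)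
  · exact (isOpen_ne_fun (ENNReal.continuous_ofReal.comp hc) continuous_const).inter
      Metric.isOpen_ball
  · simp [real_inner_smul_left, hu]
  · norm_num [norm_smul, hu]

theorem energyIneq_ofReal_norm_sub (P Q : Measure E) [IsProbabilityMeasure P]
    [IsProbabilityMeasure Q] : EnergyIneq (fun x y => ENNReal.ofReal ‖x - y‖) P Q := by
  rcases subsingleton_or_nontrivial E with _ | _
  · simp [EnergyIneq, Subsingleton.elim _ (0 : E)]
  obtain ⟨u, hu⟩ := exists_norm_eq E zero_le_one
  apply EnergyIneq.of_const_mul (lintegral_unitBall_ofReal_abs_inner_ne_zero u hu)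
    (lintegral_unitBall_ofReal_abs_inner_ne_top u hu)
  simp_rw [← lintegral_ofReal_abs_inner_eq_mul_norm map_volume_restrict_unitBall hu,
    inner_sub_right]
  exact EnergyIneq.lintegral (by fun_prop) fun w =>
    energyIneq_ofReal_abs_sub (f := fun x => ⟪w, x⟫) (by fun_prop) P Q

end InnerProductSpace

theorem lintegral_lintegral_ofReal_norm_sub {E : Type*} [NormedAddCommGroup E]
    [MeasurableSpace E] [BorelSpace E] [SecondCountableTopology E] {P Q : Measure E}
    [IsFiniteMeasure P] [IsFiniteMeasure Q] (hP : Integrable (fun x => ‖x‖) P)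
    (hQ : Integrable (fun y => ‖y‖) Q) :
    ∫⁻ x, ∫⁻ y, ENNReal.ofReal ‖x - y‖ ∂Q ∂P = ENNReal.ofReal (∫ x, ∫ y, ‖x - y‖ ∂Q ∂P) := by
  have hint : Integrable (fun p : E × E => ‖p.1 - p.2‖) (P.prod Q) :=
    ((hP.comp_fst Q).add (hQ.comp_snd P)).mono' (by fun_prop)
      (ae_of_all _ fun p => by simpa using norm_sub_le p.1 p.2)
  rw [← lintegral_prod (fun p : E × E => ENNReal.ofReal ‖p.1 - p.2‖) (by fun_prop),
    ← ofReal_integral_eq_lintegral_ofReal hint (ae_of_all _ fun _ => norm_nonneg _),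
    integral_prod _ hint]

/-- For probability measures `P, Q` on `ℝ^d` with finite first moments, the energy distance
`2E‖X-Y‖ - E‖X-X'‖ - E‖Y-Y'‖` (for mutually independent `X, X' ~ P`, `Y, Y' ~ Q`)
is nonnegative. -/
theorem energyDist_nonneg {d : ℕ} (P Q : Measure (EuclideanSpace ℝ (Fin d)))
    [IsProbabilityMeasure P] [IsProbabilityMeasure Q]
    (hP : Integrable (fun x => ‖x‖) P) (hQ : Integrable (fun y => ‖y‖) Q) :
    0 ≤ energyDist P Q := by
  have henergy := energyIneq_ofReal_norm_sub P Q
  rw [EnergyIneq, lintegral_lintegral_ofReal_norm_sub hP hP,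
    lintegral_lintegral_ofReal_norm_sub hQ hQ, lintegral_lintegral_ofReal_norm_sub hP hQ,
    ← ENNReal.ofReal_add (by positivity) (by positivity),
    two_mul, ← ENNReal.ofReal_add (by positivity) (by positivity),
    ENNReal.ofReal_le_ofReal_iff (by positivity)] at henergy
  rw [energyDist]
  linarith
end
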